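/- arXiv:2603.22335 — 2 statements merged into one kernel-verified Lean document; each statement's English description precedes it below -/
import Mathlib

section
/- Fix β > 0, n ≥ 1, and real numbers a_1, …, a_n with a_i > 0 for every i. Define the empirical DPO loss restricted to the environment weight by L(w) = (1/n) ∑_{i=1}^n −log σ(β w a_i) for w ∈ ℝ, where σ(z) = 1/(1 + exp(−z)). Then L is differentiable on ℝ with derivative L'(w) = −(β/n) ∑_{i=1}^n (1 − σ(β w a_i)) · a_i, and L'(w) < 0 for every w ∈ ℝ; in particular L is strictly decreasing on ℝ. -/
/-- The logistic sigmoid `σ(z) = 1/(1 + exp(−z))`. -/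
noncomputable def logisticSigma (z : ℝ) : ℝ := 1 / (1 + Real.exp (-z))

/-! Since `-log σ(z) = log (1 + exp (-z))`, its derivative is `-(1 - σ z)`, which is negative because
`σ < 1`; with `β, aᵢ > 0` every summand of `L'` is negative, and a negative derivative everywhere
makes `L` strictly decreasing. -/

open Real

lemma logisticSigma_lt_one (z : ℝ) : logisticSigma z < 1 := by
  unfold logisticSigma
  rw [div_lt_one (by positivity)]
  linarith [exp_pos (-z)]

lemma neg_log_logisticSigma (z : ℝ) : -log (logisticSigma z) = log (1 + exp (-z)) := by
  rw [logisticSigma, log_div one_ne_zero (by positivity), log_one, zero_sub, neg_neg]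

lemma one_sub_logisticSigma (z : ℝ) : 1 - logisticSigma z = exp (-z) / (1 + exp (-z)) := by
  unfold logisticSigma
  field_simp
  ring

theorem HasDerivAt.neg_log_logisticSigma {f : ℝ → ℝ} {f' x : ℝ} (hf : HasDerivAt f f' x) :
    HasDerivAt (fun x => -Real.log (logisticSigma (f x))) (-(1 - logisticSigma (f x)) * f') x := by
  have hsoftplus : HasDerivAt (fun x => Real.log (1 + Real.exp (-f x)))
      (Real.exp (-f x) * -f' / (1 + Real.exp (-f x))) x :=
    (hf.neg.exp.const_add 1).log (by positivity)
  simp only [_root_.neg_log_logisticSigma, one_sub_logisticSigma]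
  convert hsoftplus using 1
  ring

/-- The empirical DPO loss restricted to the environment weight,
`L(w) = (1/n) ∑ᵢ −log σ(β w aᵢ)`, is differentiable with derivative
`L'(w) = −(β/n) ∑ᵢ (1 − σ(β w aᵢ)) aᵢ`, which is negative everywhere;
in particular `L` is strictly decreasing. -/
theorem dpo_env_loss_deriv_neg_and_strictAnti
    (β : ℝ) (hβ : 0 < β) (n : ℕ) (hn : 1 ≤ n) (a : Fin n → ℝ) (ha : ∀ i, 0 < a i) :
    (∀ w : ℝ,
      HasDerivAt (fun w : ℝ => (1 / (n : ℝ)) * ∑ i, -Real.log (logisticSigma (β * w * a i)))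
        (-(β / (n : ℝ)) * ∑ i, (1 - logisticSigma (β * w * a i)) * a i) w ∧
      -(β / (n : ℝ)) * ∑ i, (1 - logisticSigma (β * w * a i)) * a i < 0) ∧
    StrictAnti (fun w : ℝ => (1 / (n : ℝ)) * ∑ i, -Real.log (logisticSigma (β * w * a i))) := by
  have hasDeriv (w : ℝ) :
      HasDerivAt (fun w : ℝ => (1 / (n : ℝ)) * ∑ i, -log (logisticSigma (β * w * a i)))
        (-(β / (n : ℝ)) * ∑ i, (1 - logisticSigma (β * w * a i)) * a i) w := by
    have hterm (i : Fin n) :=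
      HasDerivAt.neg_log_logisticSigma (((hasDerivAt_id w).const_mul β).mul_const (a i))
    refine ((HasDerivAt.fun_sum fun i _ => hterm i).const_mul (1 / (n : ℝ))).congr_deriv ?_
    rw [Finset.mul_sum, Finset.mul_sum]
    exact Finset.sum_congr rfl fun i _ => by simp only [id]; ring
  have derivNeg (w : ℝ) : -(β / (n : ℝ)) * ∑ i, (1 - logisticSigma (β * w * a i)) * a i < 0 := by
    refine mul_neg_of_neg_of_pos (neg_neg_of_pos (div_pos hβ (by exact_mod_cast hn))) ?_
    exact Finset.sum_pos (fun i _ => mul_pos (sub_pos.2 (logisticSigma_lt_one _)) (ha i))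
      (Finset.univ_nonempty_iff.2 ⟨⟨0, hn⟩⟩)
  exact ⟨fun w => ⟨hasDeriv w, derivNeg w⟩,
    strictAnti_of_deriv_neg fun w => (hasDeriv w).deriv ▸ derivNeg w⟩
end

section
/- Fix β > 0, n ≥ 1, real numbers a_1, …, a_n with a_i > 0 for every i, and a step size η > 0. Define L(w) = (1/n) ∑_{i=1}^n −log σ(β w a_i) with σ(z) = 1/(1 + exp(−z)), and define gradient-descent iterates w : ℕ → ℝ by w_{t+1} = w_t − η · L'(w_t) from any initialization w_0 ∈ ℝ. Then the sequence (w_t) is strictly increasing: w_{t+1} > w_t for all t. -/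
/-!
The derivative of `z ↦ −log σ(z)` is `σ(z) − 1 < 0`, so each term of the loss has derivative
`β aᵢ (σ(β w aᵢ) − 1) < 0` in `w`. Hence `L' < 0` everywhere and every gradient step
`w ↦ w − η L'(w)` moves `w` strictly to the right.
-/

open Real

lemma hasDerivAt_neg_log_logisticSigma (z : ℝ) :
    HasDerivAt (fun z => -log (logisticSigma z)) (logisticSigma z - 1) z := by
  have hpos : 0 < 1 + exp (-z) := by positivity
  have h := (((hasDerivAt_neg z).exp).const_add 1).log hpos.ne'
  simp only [← neg_log_logisticSigma] at h
  convert h using 1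
  rw [logisticSigma]
  field_simp
  ring

noncomputable def dpoLoss (β : ℝ) {n : ℕ} (a : Fin n → ℝ) (w : ℝ) : ℝ :=
  (1 / (n : ℝ)) * ∑ i, -log (logisticSigma (β * w * a i))

lemma hasDerivAt_dpoLoss (β : ℝ) {n : ℕ} (a : Fin n → ℝ) (x : ℝ) :
    HasDerivAt (dpoLoss β a)
      ((1 / (n : ℝ)) * ∑ i, (logisticSigma (β * x * a i) - 1) * (β * a i)) x := by
  refine HasDerivAt.const_mul _ (HasDerivAt.fun_sum fun i _ => ?_)
  have hlin : HasDerivAt (fun w => β * w * a i) (β * a i) x := by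
    simpa using ((hasDerivAt_id x).const_mul β).mul_const (a i)
  exact (hasDerivAt_neg_log_logisticSigma _).comp x hlin

lemma deriv_dpoLoss_neg {β : ℝ} (hβ : 0 < β) {n : ℕ} (hn : 1 ≤ n) {a : Fin n → ℝ}
    (ha : ∀ i, 0 < a i) (x : ℝ) : deriv (dpoLoss β a) x < 0 := by
  rw [(hasDerivAt_dpoLoss β a x).deriv]
  have hterm (i : Fin n) : (logisticSigma (β * x * a i) - 1) * (β * a i) < 0 :=
    mul_neg_of_neg_of_pos (by linarith [logisticSigma_lt_one (β * x * a i)]) (mul_pos hβ (ha i))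
  have : Nonempty (Fin n) := ⟨⟨0, hn⟩⟩
  exact mul_neg_of_pos_of_neg (by positivity) (Finset.sum_neg (fun i _ => hterm i) Finset.univ_nonempty)

lemma gradientDescent_lt_succ {L : ℝ → ℝ} (hL : ∀ x, deriv L x < 0) {η : ℝ} (hη : 0 < η)
    {w : ℕ → ℝ} (hw : ∀ t, w (t + 1) = w t - η * deriv L (w t)) (t : ℕ) : w t < w (t + 1) := by
  rw [hw t]
  linarith [mul_neg_of_pos_of_neg hη (hL (w t))]

/-- Gradient descent on the empirical DPO loss restricted to the environment weight,
`L(w) = (1/n) ∑ᵢ −log σ(β w aᵢ)` with all `aᵢ > 0`, produces a strictly increasing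
sequence of weights: `w_{t+1} > w_t` for all `t`. -/
theorem dpo_gradient_descent_weight_strict_increasing
    (β : ℝ) (hβ : 0 < β) (n : ℕ) (hn : 1 ≤ n) (a : Fin n → ℝ) (ha : ∀ i, 0 < a i)
    (η : ℝ) (hη : 0 < η)
    (L : ℝ → ℝ)
    (hL : L = fun w : ℝ => (1 / (n : ℝ)) * ∑ i, -Real.log (logisticSigma (β * w * a i)))
    (w : ℕ → ℝ) (hw : ∀ t, w (t + 1) = w t - η * deriv L (w t)) :
    ∀ t, w t < w (t + 1) := by
  have hL' : L = dpoLoss β a := hL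
  subst hL'
  exact gradientDescent_lt_succ (deriv_dpoLoss_neg hβ hn ha) hη hw
end
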